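/- Let F be a linearly ordered field, let d ≥ 2, and let G be a field-definable coordinate geometry over the ordered field F. Then a bijection g : F^d → F^d is an automorphism of G if and only if g = A ∘ α̃ for some affine automorphism A of G and some automorphism α of the ordered field F, where α̃ is the map acting as α on each coordinate. (In particular, Aut(G) = AffAut(G) ∘ {α̃ : α ∈ Aut(F)}.) -/

import Mathlib

open FirstOrder

/-- Function symbols of the language of fields `{+, ·, 0, 1}`. -/
inductive FieldFunc : ℕ → Type
  | add : FieldFunc 2
  | mul : FieldFunc 2
  | zero : FieldFunc 0
  | one : FieldFunc 0

/-- Relation symbols of the language of ordered fields: the ordering `≤`. -/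
inductive OrderRel : ℕ → Type
  | le : OrderRel 2

/-- The first-order language of fields `{+, ·, 0, 1}`. -/
def fieldLang : FirstOrder.Language := ⟨FieldFunc, fun _ => Empty⟩

/-- The first-order language of ordered fields `{+, ·, 0, 1, ≤}`. -/
def orderedFieldLang : FirstOrder.Language := ⟨FieldFunc, OrderRel⟩

/-- The interpretation of the field function symbols in a field `F`. -/
def fieldFuncMap {F : Type} [Field F] : ∀ {n}, FieldFunc n → (Fin n → F) → F
  | _, .add, x => x 0 + x 1
  | _, .mul, x => x 0 * x 1
  | _, .zero, _ => 0
  | _, .one, _ => 1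

/-- A field `F` as a structure for the language of fields. -/
def fieldStr (F : Type) [Field F] : fieldLang.Structure F where
  funMap := fieldFuncMap
  RelMap := fun r => r.elim

/-- A linearly ordered field `F` as a structure for the language of ordered fields. -/
def orderedFieldStr (F : Type) [Field F] [LinearOrder F] [IsStrictOrderedRing F] : orderedFieldLang.Structure F where
  funMap := fieldFuncMap
  RelMap := fun r x => match r with | .le => x 0 ≤ x 1

/-- An `n`-ary relation `R` on `F^d` is definable over the field `F` iff its flattening
(a `d·n`-ary relation on `F`, here indexed by `Fin n × Fin d`) is definable without parameters
by a first-order formula in the language of fields interpreted in `F`. -/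
def DefinableOverField (F : Type) [Field F] (d : ℕ) {n : ℕ}
    (R : (Fin n → Fin d → F) → Prop) : Prop :=
  letI := fieldStr F
  ∃ φ : fieldLang.Formula (Fin n × Fin d),
    ∀ p : Fin n → Fin d → F, R p ↔ φ.Realize fun q => p q.1 q.2

/-- An `n`-ary relation `R` on `F^d` is definable over the ordered field `F` iff its flattening
is definable without parameters by a first-order formula in the language of ordered fields
interpreted in `F`. -/
def DefinableOverOrderedField (F : Type) [Field F] [LinearOrder F] [IsStrictOrderedRing F] (d : ℕ) {n : ℕ}
    (R : (Fin n → Fin d → F) → Prop) : Prop :=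
  letI := orderedFieldStr F
  ∃ φ : orderedFieldLang.Formula (Fin n × Fin d),
    ∀ p : Fin n → Fin d → F, R p ↔ φ.Realize fun q => p q.1 q.2

/-- A first-order structure in a purely relational language with universe `P`,
given by an indexed family of relations with their arities. -/
structure RelStruct (P : Type) where
  ι : Type
  arity : ι → ℕ
  rel : ∀ i, (Fin (arity i) → P) → Prop

namespace RelStruct

variable {P : Type}

/-- The purely relational first-order language of `G`. -/
def lang (G : RelStruct P) : FirstOrder.Language :=
  ⟨fun _ => Empty, fun n => { i : G.ι // G.arity i = n }⟩

/-- `P` as a first-order structure for the language of `G`. -/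
def str (G : RelStruct P) : G.lang.Structure P where
  funMap := fun f => f.elim
  RelMap := fun r x => G.rel r.1 fun j => x (Fin.cast r.2 j)

/-- A relation is a *concept* of `G` iff it is definable in `G` without parameters. -/
def Concept (G : RelStruct P) {n : ℕ} (R : (Fin n → P) → Prop) : Prop :=
  letI := G.str
  ∃ φ : G.lang.Formula (Fin n), ∀ a : Fin n → P, R a ↔ φ.Realize a

/-- An automorphism of `G` is a bijection of its universe respecting all its relations. -/
def IsAut (G : RelStruct P) (g : P → P) : Prop :=
  Function.Bijective g ∧ ∀ i (a : Fin (G.arity i) → P), G.rel i a ↔ G.rel i (g ∘ a)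

/-- The set of all concepts (of all arities `n ≥ 1`) of `G`. -/
def conceptSet (G : RelStruct P) : Set (Σ n : ℕ, (Fin n → P) → Prop) :=
  { R | 1 ≤ R.1 ∧ G.Concept R.2 }

/-- The set of automorphisms of `G`. -/
def autSet (G : RelStruct P) : Set (P → P) := { g | G.IsAut g }

end RelStruct

/-- An affine transformation of `F^d`: a composition of a linear bijection with a translation. -/
def IsAffineTrf (F : Type) [Field F] (d : ℕ) (A : (Fin d → F) → (Fin d → F)) : Prop :=
  ∃ (L : (Fin d → F) ≃ₗ[F] (Fin d → F)) (t : Fin d → F), ∀ p, A p = L p + t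

/-- The set of affine automorphisms of `G`: affine transformations that are automorphisms. -/
def affAutSet (F : Type) [Field F] (d : ℕ) (G : RelStruct (Fin d → F)) :
    Set ((Fin d → F) → (Fin d → F)) :=
  { g | IsAffineTrf F d g ∧ G.IsAut g }

/-- The collinearity relation on `F^d`. -/
def Col {F : Type} [Field F] {d : ℕ} (p q r : Fin d → F) : Prop :=
  r = p ∨ ∃ l : F, q = p + l • (r - p)

/-- Collinearity as a ternary relation in the sense of `RelStruct` concepts. -/
def colRel (F : Type) [Field F] (d : ℕ) : (Fin 3 → Fin d → F) → Prop :=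
  fun a => Col (a 0) (a 1) (a 2)

/-- The betweenness relation on `F^d` over a linearly ordered field. -/
def Bw {F : Type} [Field F] [LinearOrder F] [IsStrictOrderedRing F] {d : ℕ} (p q r : Fin d → F) : Prop :=
  ∃ l : F, 0 ≤ l ∧ l ≤ 1 ∧ q = p + l • (r - p)

/-- Betweenness as a ternary relation in the sense of `RelStruct` concepts. -/
def bwRel (F : Type) [Field F] [LinearOrder F] [IsStrictOrderedRing F] (d : ℕ) : (Fin 3 → Fin d → F) → Prop :=
  fun a => Bw (a 0) (a 1) (a 2)

/-- `R` is closed under a map `g` iff `R(a₁,…,aₙ)` implies `R(g(a₁),…,g(aₙ))`. -/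
def ClosedUnder {P : Type} {n : ℕ} (R : (Fin n → P) → Prop) (g : P → P) : Prop :=
  ∀ a, R a → R (g ∘ a)

/-- The map on `F^d` induced componentwise by a field automorphism `α` of `F`. -/
def indMap {F : Type} [Field F] (α : F ≃+* F) {d : ℕ} : (Fin d → F) → (Fin d → F) :=
  fun p j => α (p j)

/-!
An automorphism `g` of `G` preserves betweenness, a concept of `G`, so `e := g - g 0` is a bijection
of `F^d` fixing `0` that preserves and reflects betweenness, hence collinearity; it maps lines onto
lines. For independent `x, y` the images of the diagonals of the parallelogram `0, x, x + y, y` meet,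
which puts `e (x + y)` in the plane of `e x` and `e y`; since disjoint lines go to disjoint lines,
opposite sides of the image stay parallel, so `e (x + y) = e x + e y`. Passing through a third vector
independent of `x` (this is where `d ≥ 2` enters) gives additivity in general and a scalar `σ t` with
`e (t • x) = σ t • e x` for all `x`. Then `σ` is a field automorphism, monotone because it maps
`[0, 1]` into `[0, 1]`. So `g = (g ∘ σ̃⁻¹) ∘ σ̃` with `g ∘ σ̃⁻¹` affine, and `σ̃` is an automorphism
of `G` because the relations of `G` are defined by ordered-field formulas, which ordered-field
automorphisms preserve.
-/

def PreservesWbtw (R : Type*) {V V' P P' : Type*} [Ring R] [PartialOrder R] [AddCommGroup V]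
    [Module R V] [AddTorsor V P] [AddCommGroup V'] [Module R V'] [AddTorsor V' P']
    (f : P → P') : Prop :=
  ∀ x y z, Wbtw R (f x) (f y) (f z) ↔ Wbtw R x y z

section Line

variable {k V P : Type*} [Field k] [AddCommGroup V] [Module k V] [AddTorsor V P]

theorem mem_line_iff_collinear {p q r : P} (hpq : p ≠ q) :
    r ∈ line[k, p, q] ↔ Collinear k {p, q, r} := by
  refine ⟨fun h => ?_, fun h => h.mem_affineSpan_of_mem_of_ne (by simp) (by simp) (by simp) hpq⟩
  rw [Set.pair_comm q r, Set.insert_comm p r]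
  exact collinear_insert_of_mem_affineSpan_pair h

theorem mem_line_zero_iff {x y : V} : y ∈ line[k, (0 : V), x] ↔ ∃ t : k, t • x = y := by
  simp [mem_affineSpan_pair_iff_exists_lineMap_eq, AffineMap.lineMap_apply_module]

theorem linearIndependent_pair_iff_not_mem_line {x y : V} :
    LinearIndependent k ![x, y] ↔ x ≠ 0 ∧ y ∉ line[k, (0 : V), x] := by
  refine ⟨fun h => ⟨h.ne_zero 0, ?_⟩, fun ⟨hx, hy⟩ => ?_⟩
  · rw [mem_line_zero_iff]
    rintro ⟨t, rfl⟩
    exact (LinearIndependent.pair_iff' (h.ne_zero 0)).1 h t rfl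
  · rw [mem_line_zero_iff, not_exists] at hy
    exact (LinearIndependent.pair_iff' hx).2 hy

theorem wbtw_zero_smul_iff [PartialOrder k] {v : V} (hv : v ≠ 0) {t : k} :
    Wbtw k 0 (t • v) v ↔ t ∈ Set.Icc (0 : k) 1 := by
  simp [Wbtw, affineSegment, AffineMap.lineMap_apply_module, smul_left_injective k hv |>.eq_iff]

theorem PreservesWbtw.sub_const [PartialOrder k] {V' : Type*} [AddCommGroup V'] [Module k V']
    {f : P → V'} (hf : PreservesWbtw k f) (c : V') : PreservesWbtw k fun x => f x - c :=
  fun x y z => by simpa only [vsub_eq_sub] using (wbtw_vsub_const_iff c).trans (hf x y z)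

end Line

section Betweenness

variable {F V V' P P' : Type*} [Field F] [LinearOrder F] [IsStrictOrderedRing F]
  [AddCommGroup V] [Module F V] [AddTorsor V P] [AddCommGroup V'] [Module F V'] [AddTorsor V' P']

theorem collinear_iff_wbtw {x y z : P} :
    Collinear F {x, y, z} ↔ Wbtw F x y z ∨ Wbtw F y z x ∨ Wbtw F z x y := by
  refine ⟨Collinear.wbtw_or_wbtw_or_wbtw, ?_⟩
  rintro (h | h | h) <;> have := h.collinear
  · exact this
  · rwa [Set.pair_comm z x, Set.insert_comm y x] at this
  · rwa [Set.insert_comm z x, Set.pair_comm z y] at this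

namespace PreservesWbtw

variable {f : P → P'}

theorem collinear_iff (hf : PreservesWbtw F f) {x y z : P} :
    Collinear F {f x, f y, f z} ↔ Collinear F {x, y, z} := by
  simp only [collinear_iff_wbtw, hf _ _ _]

theorem mem_line_iff (hf : PreservesWbtw F f) (hinj : Function.Injective f) {p q r : P}
    (hpq : p ≠ q) : f r ∈ line[F, f p, f q] ↔ r ∈ line[F, p, q] := by
  rw [mem_line_iff_collinear (hinj.ne hpq), mem_line_iff_collinear hpq, hf.collinear_iff]

end PreservesWbtw

end Betweenness

theorem RingHom.monotone_of_map_Icc_nonneg {F K : Type*} [Field F] [LinearOrder F]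
    [IsStrictOrderedRing F] [Field K] [LinearOrder K] [IsStrictOrderedRing K] (σ : F →+* K)
    (hσ : ∀ t ∈ Set.Icc (0 : F) 1, 0 ≤ σ t) : Monotone σ := by
  intro a b hab
  suffices 0 ≤ σ (b - a) by rwa [map_sub, sub_nonneg] at this
  rcases le_total (b - a) 1 with h1 | h1
  · exact hσ _ ⟨sub_nonneg.2 hab, h1⟩
  · have := hσ (b - a)⁻¹ ⟨inv_nonneg.2 (sub_nonneg.2 hab), inv_le_one_of_one_le₀ h1⟩
    rwa [map_inv₀, inv_nonneg] at this

namespace PreservesWbtw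

variable {F V : Type*} [Field F] [LinearOrder F] [IsStrictOrderedRing F]
  [AddCommGroup V] [Module F V] {e : V ≃ V}

theorem exists_smul_eq_map_smul (he : PreservesWbtw F e) (he0 : e 0 = 0) {x : V} (hx : x ≠ 0)
    (t : F) : ∃ s : F, s • e x = e (t • x) := by
  have h := (he.mem_line_iff e.injective hx.symm).2 (mem_line_zero_iff.2 ⟨t, rfl⟩)
  rwa [he0, mem_line_zero_iff] at h

theorem linearIndependent_iff (he : PreservesWbtw F e) (he0 : e 0 = 0) {x y : V} :
    LinearIndependent F ![e x, e y] ↔ LinearIndependent F ![x, y] := by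
  simp only [linearIndependent_pair_iff_not_mem_line, e.injective.ne_iff' he0]
  refine and_congr_right fun hx => not_congr ?_
  rw [← he.mem_line_iff e.injective hx.symm, he0]

theorem exists_map_add_eq_smul_add_smul (he : PreservesWbtw F e) (he0 : e 0 = 0) {x y : V}
    (hxy : LinearIndependent F ![x, y]) : ∃ a b : F, e (x + y) = a • e x + b • e y := by
  have hm : midpoint F x y = (2⁻¹ : F) • (x + y) := by rw [midpoint_eq_smul_add, invOf_eq_inv]
  have hxy0 : x + y ≠ 0 := (LinearIndependent.pair_add_right_iff.2 hxy).ne_zero 1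
  have hm0 : midpoint F x y ≠ 0 := by
    rw [hm]
    exact smul_ne_zero (inv_ne_zero two_ne_zero) hxy0
  -- the midpoint of `x` and `y` is that of `0` and `x + y`: its image lies on both image diagonals
  have h1 : Wbtw F (e 0) (e (midpoint F x y)) (e (x + y)) := by
    rw [he, hm, wbtw_zero_smul_iff hxy0]
    constructor <;> norm_num
  have h2 : Wbtw F (e x) (e (midpoint F x y)) (e y) := (he _ _ _).2 (wbtw_midpoint F x y)
  rw [he0] at h1
  obtain ⟨l, hl⟩ := mem_line_zero_iff.1 h1.mem_affineSpan
  obtain ⟨μ, hμ⟩ := mem_affineSpan_pair_iff_exists_lineMap_eq.1 h2.mem_affineSpan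
  have hl0 : l ≠ 0 := by
    rintro rfl
    rw [zero_smul, eq_comm, ← he0, e.injective.eq_iff] at hl
    exact hm0 hl
  refine ⟨l⁻¹ * (1 - μ), l⁻¹ * μ, ?_⟩
  rw [AffineMap.lineMap_apply_module, ← hl] at hμ
  rw [← inv_smul_smul₀ hl0 (e (x + y)), ← hμ]
  module

theorem eq_one_of_map_add_eq_smul_add_smul (he : PreservesWbtw F e) (he0 : e 0 = 0) {x y : V}
    (hxy : LinearIndependent F ![x, y]) {a b : F} (hab : e (x + y) = a • e x + b • e y) :
    b = 1 := by
  by_contra hb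
  have hb1 : b - 1 ≠ 0 := sub_ne_zero.2 hb
  have hx : x ≠ 0 := hxy.ne_zero 0
  have hy : y ≠ x + y := by simpa [eq_comm] using hx
  -- otherwise the images of the disjoint lines `F • x` and `y + F • x` would meet at `e z`
  set z := e.symm ((-(a / (b - 1))) • e x)
  have h1 : e z ∈ line[F, e 0, e x] := by
    rw [e.apply_symm_apply, he0]
    exact mem_line_zero_iff.2 ⟨_, rfl⟩
  have h2 : e z ∈ line[F, e y, e (x + y)] := by
    rw [e.apply_symm_apply, mem_affineSpan_pair_iff_exists_lineMap_eq]
    refine ⟨-(b - 1)⁻¹, ?_⟩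
    rw [AffineMap.lineMap_apply_module, hab]
    match_scalars <;> field_simp; ring
  obtain ⟨c, hc⟩ := mem_line_zero_iff.1 ((he.mem_line_iff e.injective hx.symm).1 h1)
  obtain ⟨c', hc'⟩ := mem_affineSpan_pair_iff_exists_lineMap_eq.1
    ((he.mem_line_iff e.injective hy).1 h2)
  rw [AffineMap.lineMap_apply_module', add_sub_cancel_right] at hc'
  have := LinearIndependent.pair_iff.1 hxy (c - c') (-1) (by rw [sub_smul, hc, ← hc']; module)
  simp at this

theorem map_add_of_linearIndependent (he : PreservesWbtw F e) (he0 : e 0 = 0) {x y : V}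
    (hxy : LinearIndependent F ![x, y]) : e (x + y) = e x + e y := by
  obtain ⟨a, b, hab⟩ := he.exists_map_add_eq_smul_add_smul he0 hxy
  have hb := he.eq_one_of_map_add_eq_smul_add_smul he0 hxy hab
  have ha := he.eq_one_of_map_add_eq_smul_add_smul he0 (LinearIndependent.pair_symm_iff.1 hxy)
    (by rw [add_comm, hab, add_comm])
  rw [hab, ha, hb, one_smul, one_smul]

theorem map_add (he : PreservesWbtw F e) (he0 : e 0 = 0) (hV : 1 < Module.rank F V) (x y : V) :
    e (x + y) = e x + e y := by
  rcases eq_or_ne x 0 with rfl | hx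
  · rw [zero_add, he0, zero_add]
  by_cases hxy : LinearIndependent F ![x, y]
  · exact he.map_add_of_linearIndependent he0 hxy
  obtain ⟨c, rfl⟩ : ∃ c : F, c • x = y := by simpa [LinearIndependent.pair_iff' hx] using hxy
  obtain ⟨z, hz⟩ := exists_linearIndependent_pair_of_one_lt_rank hV hx
  have hadd_z : ∀ a : F, e (a • x + z) = e (a • x) + e z := fun a => by
    rcases eq_or_ne a 0 with rfl | ha
    · rw [zero_smul, zero_add, he0, zero_add]
    refine he.map_add_of_linearIndependent he0 ?_
    simpa using (LinearIndependent.pair_smul_smul_iff ha.isUnit isUnit_one).2 hz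
  have hshear : ∀ a : F, LinearIndependent F ![x, a • x + z] := fun a =>
    (LinearIndependent.pair_add_smul_right_iff a).2 hz
  apply add_right_cancel (b := e z)
  calc e (x + c • x) + e z = e ((1 + c) • x + z) := by rw [hadd_z, add_smul, one_smul]
    _ = e (x + (c • x + z)) := by rw [add_smul, one_smul, add_assoc]
    _ = e x + e (c • x) + e z := by
      rw [he.map_add_of_linearIndependent he0 (hshear c), hadd_z, add_assoc]

theorem eq_of_smul_eq_map_smul_of_linearIndependent (he : PreservesWbtw F e) (he0 : e 0 = 0)
    (hV : 1 < Module.rank F V) {x y : V} (hxy : LinearIndependent F ![x, y]) {t s s' : F}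
    (hx : s • e x = e (t • x)) (hy : s' • e y = e (t • y)) : s = s' := by
  have hxy0 : x + y ≠ 0 := (LinearIndependent.pair_add_right_iff.2 hxy).ne_zero 1
  obtain ⟨s'', h⟩ := he.exists_smul_eq_map_smul he0 hxy0 t
  rw [smul_add, he.map_add he0 hV, he.map_add he0 hV, ← hx, ← hy] at h
  have := LinearIndependent.pair_iff.1 ((he.linearIndependent_iff he0).2 hxy) (s'' - s)
    (s'' - s') (by linear_combination (norm := module) h)
  linear_combination this.2 - this.1

theorem eq_of_smul_eq_map_smul (he : PreservesWbtw F e) (he0 : e 0 = 0)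
    (hV : 1 < Module.rank F V) {x y : V} (hx0 : x ≠ 0) (hy0 : y ≠ 0) {t s s' : F}
    (hx : s • e x = e (t • x)) (hy : s' • e y = e (t • y)) : s = s' := by
  by_cases hxy : LinearIndependent F ![x, y]
  · exact he.eq_of_smul_eq_map_smul_of_linearIndependent he0 hV hxy hx hy
  obtain ⟨c, rfl⟩ : ∃ c : F, c • x = y := by simpa [LinearIndependent.pair_iff' hx0] using hxy
  have hc : c ≠ 0 := by rintro rfl; simp at hy0
  obtain ⟨z, hz⟩ := exists_linearIndependent_pair_of_one_lt_rank hV hx0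
  have hcz : LinearIndependent F ![c • x, z] := by
    simpa using (LinearIndependent.pair_smul_smul_iff hc.isUnit isUnit_one).2 hz
  obtain ⟨s'', hz'⟩ := he.exists_smul_eq_map_smul he0 (hz.ne_zero 1) t
  exact (he.eq_of_smul_eq_map_smul_of_linearIndependent he0 hV hz hx hz').trans
    (he.eq_of_smul_eq_map_smul_of_linearIndependent he0 hV hcz hy hz').symm

theorem exists_ringHom_map_smul (he : PreservesWbtw F e) (he0 : e 0 = 0)
    (hV : 1 < Module.rank F V) : ∃ σ : F →+* F, ∀ (t : F) (x : V), e (t • x) = σ t • e x := by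
  have : Nontrivial V := rank_pos_iff_nontrivial.1 (zero_lt_one.trans hV)
  obtain ⟨v, hv⟩ := exists_ne (0 : V)
  choose σ hσ using he.exists_smul_eq_map_smul he0 hv
  have hσx : ∀ (t : F) (x : V), e (t • x) = σ t • e x := by
    intro t x
    rcases eq_or_ne x 0 with rfl | hx
    · rw [smul_zero, he0, smul_zero]
    obtain ⟨s, hs⟩ := he.exists_smul_eq_map_smul he0 hx t
    rw [← hs, he.eq_of_smul_eq_map_smul he0 hV hx hv hs (hσ t)]
  have hcancel := smul_left_injective F ((e.injective.ne_iff' he0).2 hv)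
  refine ⟨{ toFun := σ
            map_one' := hcancel ?_
            map_mul' := fun s t => hcancel ?_
            map_zero' := hcancel ?_
            map_add' := fun s t => hcancel ?_ }, hσx⟩
  · simp only [hσ, one_smul]
  · dsimp only
    rw [hσ, mul_smul, hσx, ← hσ t, smul_smul]
  · simp only [hσ, zero_smul, he0]
  · simp only [hσ, add_smul, he.map_add he0 hV]

theorem surjective_of_map_smul (he : PreservesWbtw F e) (he0 : e 0 = 0) [Nontrivial V]
    {σ : F →+* F} (hσ : ∀ (t : F) (x : V), e (t • x) = σ t • e x) : Function.Surjective σ := by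
  obtain ⟨v, hv⟩ := exists_ne (0 : V)
  intro s
  have h : e (e.symm (s • e v)) ∈ line[F, e 0, e v] := by
    rw [e.apply_symm_apply, he0]
    exact mem_line_zero_iff.2 ⟨s, rfl⟩
  obtain ⟨t, ht⟩ := mem_line_zero_iff.1 ((he.mem_line_iff e.injective hv.symm).1 h)
  refine ⟨t, smul_left_injective F ((e.injective.ne_iff' he0).2 hv) ?_⟩
  simp only [← hσ, ht, e.apply_symm_apply]

theorem monotone_of_map_smul (he : PreservesWbtw F e) (he0 : e 0 = 0) [Nontrivial V]
    {σ : F →+* F} (hσ : ∀ (t : F) (x : V), e (t • x) = σ t • e x) : Monotone σ := by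
  obtain ⟨v, hv⟩ := exists_ne (0 : V)
  refine σ.monotone_of_map_Icc_nonneg fun t ht => ?_
  have h := (he 0 (t • v) v).2 ((wbtw_zero_smul_iff hv).2 ht)
  rw [he0, hσ, wbtw_zero_smul_iff ((e.injective.ne_iff' he0).2 hv)] at h
  exact h.1

theorem exists_orderRingIso_map_smul (he : PreservesWbtw F e) (he0 : e 0 = 0)
    (hV : 1 < Module.rank F V) : ∃ σ : F ≃+*o F, ∀ (t : F) (x : V), e (t • x) = σ t • e x := by
  have : Nontrivial V := rank_pos_iff_nontrivial.1 (zero_lt_one.trans hV)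
  obtain ⟨σ, hσ⟩ := he.exists_ringHom_map_smul he0 hV
  have hmono := (he.monotone_of_map_smul he0 hσ).strictMono_of_injective σ.injective
  exact ⟨⟨RingEquiv.ofBijective σ ⟨σ.injective, he.surjective_of_map_smul he0 hσ⟩,
    hmono.le_iff_le⟩, hσ⟩

end PreservesWbtw

theorem bw_iff_wbtw {F : Type} [Field F] [LinearOrder F] [IsStrictOrderedRing F] {d : ℕ}
    {p q r : Fin d → F} : Bw p q r ↔ Wbtw F p q r := by
  simp only [Bw, Wbtw, affineSegment, Set.mem_image, Set.mem_Icc, AffineMap.lineMap_apply_module',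
    eq_comm (a := q), add_comm p, and_assoc]

namespace RelStruct.IsAut

variable {P : Type} {G : RelStruct P} {g : P → P}

theorem realize_comp_iff (hg : G.IsAut g) {n : ℕ} (φ : G.lang.Formula (Fin n)) (a : Fin n → P) :
    letI := G.str
    φ.Realize (g ∘ a) ↔ φ.Realize a := by
  let := G.str
  let gE : P ≃[G.lang] P :=
    { toEquiv := Equiv.ofBijective g hg.1
      map_fun' := fun f => f.elim
      map_rel' := fun r x => (hg.2 r.1 fun j => x (Fin.cast r.2 j)).symm }
  exact Language.StrongHomClass.realize_formula gE φ

theorem concept_iff (hg : G.IsAut g) {n : ℕ} {R : (Fin n → P) → Prop} (hR : G.Concept R)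
    (a : Fin n → P) : R (g ∘ a) ↔ R a := by
  obtain ⟨φ, hφ⟩ := hR
  rw [hφ, hφ, hg.realize_comp_iff]

theorem comp {f : P → P} (hf : G.IsAut f) (hg : G.IsAut g) : G.IsAut (f ∘ g) :=
  ⟨hf.1.comp hg.1, fun i a => (hg.2 i a).trans (hf.2 i (g ∘ a))⟩

theorem preservesWbtw {F : Type} [Field F] [LinearOrder F] [IsStrictOrderedRing F] {d : ℕ}
    {G : RelStruct (Fin d → F)} {g : (Fin d → F) → Fin d → F} (hg : G.IsAut g)
    (hbw : G.Concept (bwRel F d)) : PreservesWbtw F g := fun p q r => by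
  rw [← bw_iff_wbtw, ← bw_iff_wbtw]
  exact hg.concept_iff hbw ![p, q, r]

end RelStruct.IsAut

section Induced

variable {F : Type} [Field F] {d : ℕ}

theorem indMap_symm_indMap (α : F ≃+* F) (p : Fin d → F) : indMap α.symm (indMap α p) = p :=
  funext fun _ => α.symm_apply_apply _

theorem indMap_bijective (α : F ≃+* F) : Function.Bijective (indMap α (d := d)) :=
  Function.bijective_iff_has_inverse.2
    ⟨indMap α.symm, indMap_symm_indMap α, indMap_symm_indMap α.symm⟩

theorem isAffineTrf_comp_indMap_symm {e : (Fin d → F) ≃ (Fin d → F)} {σ : F ≃+* F}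
    (hadd : ∀ x y, e (x + y) = e x + e y) (hsmul : ∀ (t : F) x, e (t • x) = σ t • e x)
    (c : Fin d → F) : IsAffineTrf F d fun p => e (indMap σ.symm p) + c := by
  let L : (Fin d → F) →ₗ[F] (Fin d → F) :=
    { toFun := fun p => e (indMap σ.symm p)
      map_add' := fun p q => by
        rw [← hadd]
        congr 1
        exact funext fun _ => map_add σ.symm _ _
      map_smul' := fun t p => by
        rw [RingHom.id_apply, ← σ.apply_symm_apply t, ← hsmul, σ.apply_symm_apply]
        congr 1
        exact funext fun _ => map_mul σ.symm _ _ }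
  exact ⟨LinearEquiv.ofBijective L (e.bijective.comp (indMap_bijective _)), c, fun _ => rfl⟩

end Induced

section OrderedField

variable {F : Type} [Field F] [LinearOrder F] [IsStrictOrderedRing F]

theorem OrderRingIso.realize_comp_iff (σ : F ≃+*o F) {γ : Type} (φ : orderedFieldLang.Formula γ)
    (v : γ → F) :
    letI := orderedFieldStr F
    φ.Realize (σ ∘ v) ↔ φ.Realize v := by
  let := orderedFieldStr F
  let σE : F ≃[orderedFieldLang] F :=
    { toEquiv := σ.toEquiv
      map_fun' := fun f x => by
        cases f
        · exact map_add σ _ _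
        · exact map_mul σ _ _
        · exact map_zero σ
        · exact map_one σ
      map_rel' := fun r x => by
        cases r
        exact map_le_map_iff σ }
  exact Language.StrongHomClass.realize_formula σE φ

theorem isAut_indMap {d : ℕ} {G : RelStruct (Fin d → F)}
    (hfd : ∀ i, DefinableOverOrderedField F d (G.rel i)) (σ : F ≃+*o F) :
    G.IsAut (indMap σ.toRingEquiv) := by
  refine ⟨indMap_bijective _, fun i a => ?_⟩
  obtain ⟨φ, hφ⟩ := hfd i
  rw [hφ, hφ]
  exact (σ.realize_comp_iff φ fun q => a q.1 q.2).symm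

end OrderedField

/-- **Proposition.** Let `G` be a field-definable coordinate geometry over a linearly ordered
field `F` (`d ≥ 2`). A bijection `g` of `F^d` is an automorphism of `G` iff `g = A ∘ α̃` for some
affine automorphism `A` of `G` and some order-preserving field automorphism `α` of `F`. -/
theorem aut_iff_affAut_comp_induced
    (F : Type) [Field F] [LinearOrder F] [IsStrictOrderedRing F] (d : ℕ) (hd : 2 ≤ d)
    (G : RelStruct (Fin d → F))
    (hfd : ∀ i, DefinableOverOrderedField F d (G.rel i))
    (hgeo : G.Concept (bwRel F d))
    (g : (Fin d → F) → (Fin d → F)) (hg : Function.Bijective g) :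
    G.IsAut g ↔
      ∃ (A : (Fin d → F) → (Fin d → F)) (α : F ≃+* F),
        IsAffineTrf F d A ∧ G.IsAut A ∧ (∀ x y : F, x ≤ y ↔ α x ≤ α y) ∧
          g = A ∘ indMap α := by
  refine ⟨fun hAut => ?_, ?_⟩
  · let e := (Equiv.ofBijective g hg).trans (Equiv.subRight (g 0))
    have he : PreservesWbtw F e := (hAut.preservesWbtw hgeo).sub_const (g 0)
    have he0 : e 0 = 0 := sub_self (g 0)
    have hV : 1 < Module.rank F (Fin d → F) := by rw [rank_fin_fun]; exact_mod_cast hd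
    obtain ⟨σ, hσ⟩ := he.exists_orderRingIso_map_smul he0 hV
    have hA : (fun p => e (indMap σ.toRingEquiv.symm p) + g 0) = g ∘ indMap σ.toRingEquiv.symm :=
      funext fun p => sub_add_cancel _ _
    refine ⟨_, σ.toRingEquiv, hA ▸ isAffineTrf_comp_indMap_symm (he.map_add he0 hV) hσ (g 0),
      hAut.comp (isAut_indMap hfd σ.symm), fun x y => (map_le_map_iff σ).symm, ?_⟩
    exact funext fun p => congrArg g (indMap_symm_indMap σ.toRingEquiv p).symm
  · rintro ⟨A, α, -, hA, hα, rfl⟩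
    exact hA.comp (isAut_indMap hfd ⟨α, fun {x y} => (hα x y).symm⟩)
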